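/- Let G = (V,E) be a finite simple undirected graph, s, t ∈ V distinct, C a fractional (s,t)-vertex cut of G, d(v) = dist_{G,C}(s,v), and ε > 0. Suppose d̃ : V → ℝ≥0 satisfies d(v) ≤ d̃(v) ≤ (1+ε)·d(v) for every vertex v reachable from s. Then for every θ ∈ (0, 1/(1+ε)), with L̃_θ = {v : d̃(v) < θ}, S̃_θ = {v : θ ≤ d̃(v) ≤ (1+ε)(θ + C(v))}, and R̃_θ = {v : d̃(v) > (1+ε)(θ + C(v))} ∪ {v : v unreachable from s}, the triple (L̃_θ, S̃_θ, R̃_θ) is an (s,t)-vertex cut of G; in particular S̃_θ is an (s,t)-separator. -/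

import Mathlib

open scoped ENNReal

/-- Vertex-length distance: the infimum, over all `(s,v)`-paths `p` of `G`, of the sum of the
vertex lengths `C` along `p` (`∞` if `v` is unreachable from `s`). -/
noncomputable def vdist {V : Type*} (G : SimpleGraph V) (C : V → ℝ) (s v : V) : ℝ≥0∞ :=
  ⨅ p : {p : G.Walk s v // p.IsPath}, ENNReal.ofReal ((p.1.support.map C).sum)

/-!
Put `d = vdist G C s`. If `u ∈ L̃_θ` then `d u ≤ d̃ u < θ`, and for a neighbour `v` of `u` the
triangle inequality `d v ≤ d u + C v` gives `d̃ v ≤ (1+ε) d v < (1+ε)(θ + C v)`, so `v ∉ R̃_θ`.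
Since `C` is a fractional cut, `d̃ t ≥ d t ≥ 1 > (1+ε) θ = (1+ε)(θ + C t)`, so `t ∈ R̃_θ`, while
`d̃ s ≤ (1+ε) d s = 0` puts `s` in `L̃_θ`. The rest is the trichotomy of the defining inequalities.
-/

namespace SimpleGraph

variable {V : Type*} {G : SimpleGraph V} {C : V → ℝ}

lemma vdist_le_of_isPath {s v : V} {p : G.Walk s v} (hp : p.IsPath) :
    vdist G C s v ≤ ENNReal.ofReal ((p.support.map C).sum) :=
  iInf_le (fun q : {q : G.Walk s v // q.IsPath} => ENNReal.ofReal ((q.1.support.map C).sum))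
    ⟨p, hp⟩

lemma vdist_self_eq_zero {s : V} (hCs : C s = 0) : vdist G C s s = 0 := by
  simpa [hCs] using vdist_le_of_isPath (C := C) (Walk.IsPath.nil (G := G) (u := s))

lemma ofReal_le_vdist {s v : V} {a : ℝ}
    (h : ∀ p : G.Walk s v, p.IsPath → a ≤ (p.support.map C).sum) :
    ENNReal.ofReal a ≤ vdist G C s v :=
  le_iInf fun p => ENNReal.ofReal_le_ofReal (h p.1 p.2)

/-- Walks may repeat vertices; with nonnegative lengths, shortcutting to a path only helps. -/
lemma vdist_le_of_walk (hC : ∀ v, 0 ≤ C v) {s v : V} (q : G.Walk s v) :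
    vdist G C s v ≤ ENNReal.ofReal ((q.support.map C).sum) := by
  classical
  refine (vdist_le_of_isPath q.bypass_isPath).trans (ENNReal.ofReal_le_ofReal ?_)
  obtain ⟨m, hm, hms⟩ := q.bypass_isPath.support_nodup.subperm q.support_bypass_subset_support
  calc (q.bypass.support.map C).sum = (m.map C).sum := ((hm.map C).sum_eq).symm
    _ ≤ (q.support.map C).sum :=
        (hms.map C).sum_le_sum fun _ ha => by
          obtain ⟨y, -, rfl⟩ := List.mem_map.1 ha
          exact hC y

lemma vdist_le_add_of_adj (hC : ∀ v, 0 ≤ C v) {s u v : V} (h : G.Adj u v) :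
    vdist G C s v ≤ vdist G C s u + ENNReal.ofReal (C v) := by
  conv_rhs => rw [vdist, ENNReal.iInf_add]
  refine le_iInf fun p => (vdist_le_of_walk hC (p.1.concat h)).trans ?_
  simpa [Walk.support_concat] using ENNReal.ofReal_add_le

lemma approx_le_of_adj (hC : ∀ v, 0 ≤ C v) {s u v : V} (h : G.Adj u v) {dt : V → ℝ}
    {c θ : ℝ} (hc : 0 ≤ c) (hθ : 0 ≤ θ) (hu : vdist G C s u ≤ ENNReal.ofReal (dt u))
    (hv : ENNReal.ofReal (dt v) ≤ ENNReal.ofReal c * vdist G C s v) (hdtu : dt u < θ) :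
    dt v ≤ c * (θ + C v) := by
  have hθCv : 0 ≤ θ + C v := add_nonneg hθ (hC v)
  rw [← ENNReal.ofReal_le_ofReal_iff (mul_nonneg hc hθCv)]
  calc ENNReal.ofReal (dt v) ≤ ENNReal.ofReal c * vdist G C s v := hv
    _ ≤ ENNReal.ofReal c * (ENNReal.ofReal θ + ENNReal.ofReal (C v)) := by
        gcongr
        exact (vdist_le_add_of_adj hC h).trans
          (add_le_add_left (hu.trans (ENNReal.ofReal_le_ofReal hdtu.le)) _)
    _ = ENNReal.ofReal (c * (θ + C v)) := by
        rw [← ENNReal.ofReal_add hθ (hC v), ← ENNReal.ofReal_mul hc]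

end SimpleGraph

open SimpleGraph

theorem stmt_3_general {V : Type*} (G : SimpleGraph V) (s t : V)
    (C : V → ℝ) (hC : ∀ v, 0 ≤ C v) (hCs : C s = 0) (hCt : C t = 0)
    (hcut : ∀ p : G.Walk s t, p.IsPath → 1 ≤ (p.support.map C).sum)
    (ε : ℝ) (hε : 0 < ε)
    (dt : V → ℝ)
    (happrox : ∀ v, G.Reachable s v →
      vdist G C s v ≤ ENNReal.ofReal (dt v) ∧
      ENNReal.ofReal (dt v) ≤ ENNReal.ofReal (1 + ε) * vdist G C s v)
    (θ : ℝ) (hθ0 : 0 < θ) (hθ1 : θ < 1 / (1 + ε)) :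
    let L : Set V := {v | G.Reachable s v ∧ dt v < θ}
    let S : Set V := {v | G.Reachable s v ∧ θ ≤ dt v ∧ dt v ≤ (1 + ε) * (θ + C v)}
    let R : Set V := {v | G.Reachable s v ∧ (1 + ε) * (θ + C v) < dt v} ∪
      {v | ¬ G.Reachable s v}
    (L ∪ S ∪ R = Set.univ) ∧ Disjoint L S ∧ Disjoint L R ∧ Disjoint S R ∧
      s ∈ L ∧ t ∈ R ∧ (∀ u ∈ L, ∀ v ∈ R, ¬ G.Adj u v) := by
  intro L S R
  have hθ_le : ∀ v, θ ≤ (1 + ε) * (θ + C v) := fun v => by nlinarith [hC v]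
  have hdts : dt s ≤ 0 := by
    simpa [vdist_self_eq_zero hCs] using (happrox s .rfl).2
  have hdtt (hr : G.Reachable s t) : 1 ≤ dt t := ENNReal.one_le_ofReal.1 <|
    (by simpa using ofReal_le_vdist hcut : 1 ≤ vdist G C s t).trans (happrox t hr).1
  refine ⟨?_, ?_, ?_, ?_, ⟨.rfl, hdts.trans_lt hθ0⟩, ?_, ?_⟩
  · ext v
    simp only [L, S, R, Set.mem_union, Set.mem_ofPred_eq, Set.mem_univ, iff_true]
    have := lt_or_ge (dt v) θ
    have := le_or_gt (dt v) ((1 + ε) * (θ + C v))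
    tauto
  · exact Set.disjoint_left.2 fun v hL hS => hL.2.not_ge hS.2.1
  · refine Set.disjoint_left.2 fun v hL hR => ?_
    rcases hR with ⟨-, h⟩ | h
    exacts [(hL.2.trans_le (hθ_le v)).not_gt h, h hL.1]
  · refine Set.disjoint_left.2 fun v hS hR => ?_
    rcases hR with ⟨-, h⟩ | h
    exacts [hS.2.2.not_gt h, h hS.1]
  · by_cases hr : G.Reachable s t
    · refine Or.inl ⟨hr, ?_⟩
      rw [hCt, add_zero]
      rw [lt_div_iff₀ (by linarith)] at hθ1
      linarith [hdtt hr]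
    · exact Or.inr hr
  · rintro u ⟨hru, hu⟩ v hR hadj
    have hrv : G.Reachable s v := hru.trans hadj.reachable
    rcases hR with ⟨-, hR⟩ | hR
    · exact hR.not_ge <| approx_le_of_adj hC hadj (by linarith) hθ0.le
        (happrox u hru).1 (happrox v hrv).2 hu
    · exact hR hrv

/-- Let `C` be a fractional `(s,t)`-vertex cut of `G`,
`d v = dist_{G,C}(s,v)`, `ε > 0`, and `d̃` a `(1+ε)`-approximation of `d` on the vertices
reachable from `s`. Then for every `θ ∈ (0, 1/(1+ε))`, the triple
`(L̃_θ, S̃_θ, R̃_θ)` with `L̃_θ = {d̃ < θ}`, `S̃_θ = {θ ≤ d̃ ≤ (1+ε)(θ+C)}`, and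
`R̃_θ = {d̃ > (1+ε)(θ+C)} ∪ {unreachable}` is an `(s,t)`-vertex cut of `G`; in particular
`S̃_θ` is an `(s,t)`-separator. -/
theorem stmt_3 {V : Type*} [Fintype V] (G : SimpleGraph V) (s t : V) (hst : s ≠ t)
    (C : V → ℝ) (hC : ∀ v, 0 ≤ C v) (hCs : C s = 0) (hCt : C t = 0)
    (hcut : ∀ p : G.Walk s t, p.IsPath → 1 ≤ (p.support.map C).sum)
    (ε : ℝ) (hε : 0 < ε)
    (dt : V → ℝ) (hdt0 : ∀ v, 0 ≤ dt v)
    (happrox : ∀ v, G.Reachable s v →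
      vdist G C s v ≤ ENNReal.ofReal (dt v) ∧
      ENNReal.ofReal (dt v) ≤ ENNReal.ofReal (1 + ε) * vdist G C s v)
    (θ : ℝ) (hθ0 : 0 < θ) (hθ1 : θ < 1 / (1 + ε)) :
    let L : Set V := {v | G.Reachable s v ∧ dt v < θ}
    let S : Set V := {v | G.Reachable s v ∧ θ ≤ dt v ∧ dt v ≤ (1 + ε) * (θ + C v)}
    let R : Set V := {v | G.Reachable s v ∧ (1 + ε) * (θ + C v) < dt v} ∪
      {v | ¬ G.Reachable s v}
    (L ∪ S ∪ R = Set.univ) ∧ Disjoint L S ∧ Disjoint L R ∧ Disjoint S R ∧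
      s ∈ L ∧ t ∈ R ∧ (∀ u ∈ L, ∀ v ∈ R, ¬ G.Adj u v) :=
  stmt_3_general G s t C hC hCs hCt hcut ε hε dt happrox θ hθ0 hθ1
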